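/- arXiv:1102.1378 — 2 statements merged into one kernel-verified Lean document; each statement's English description precedes it below -/
import Mathlib

section
/- Let H be a real Hilbert space with dim H ≥ 2 and let φ : H → ℝ be such that for every nonempty closed convex set C ⊆ H the infimum of φ on C is attained at P_C 0. Then, except for at most countably many values of ρ ∈ [0,∞), φ is constant on the sphere S(0;ρ) = {x ∈ H : ‖x‖ = ρ}. -/
/-!
The half-space `{z | ‖x‖² ≤ ⟪x, z⟫}` is closed and convex and has `x` as its point of least
norm, so `φ x ≤ φ y` whenever `‖x‖² ≤ ⟪x, y⟫`. Stepping along a great circle by an angle `δ`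
while stretching by `1 / cos δ` satisfies this with equality. Since `cos (θ / n) ^ n → 1`, a
chain of `n` such steps followed by a radial stretch leads from any `x` to any `y` with
`‖x‖ < ‖y‖` (a great circle from `x` to `y` exists once `dim H ≥ 2`). Thus `φ` is monotone in
the norm, and the spheres on which it is not constant carry pairwise disjoint nonempty open
intervals of values, of which there are only countably many.
-/

open RealInnerProductSpace Filter Set

/-- `p` is the metric projection of `x` onto `C`. -/
def IsProj {E : Type*} [NormedAddCommGroup E] (C : Set E) (x p : E) : Prop :=
  p ∈ C ∧ ∀ y ∈ C, ‖x - p‖ ≤ ‖x - y‖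

section
variable {E : Type*} [NormedAddCommGroup E] [InnerProductSpace ℝ E]

theorem isProj_zero_halfSpace (x : E) : IsProj {z | ‖x‖ ^ 2 ≤ ⟪x, z⟫} 0 x := by
  refine ⟨by simp, fun z hz => ?_⟩
  rw [zero_sub, zero_sub, norm_neg, norm_neg]
  rcases (norm_nonneg x).eq_or_lt with hx | hx
  · exact hx ▸ norm_nonneg z
  · exact le_of_mul_le_mul_left (sq ‖x‖ ▸ hz.trans (real_inner_le_norm x z)) hx

def AttainsInfAtProjZero (φ : E → ℝ) : Prop :=
  ∀ C : Set E, C.Nonempty → IsClosed C → Convex ℝ C → ∀ p, IsProj C 0 p → ∀ y ∈ C, φ p ≤ φ y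

noncomputable def greatCircle (u e : E) (t : ℝ) : E := Real.cos t • u + Real.sin t • e

section greatCircle
variable {u e : E} (hu : ‖u‖ = 1) (he : ‖e‖ = 1) (hue : ⟪u, e⟫ = 0)
include hu he hue

theorem inner_greatCircle (s t : ℝ) :
    ⟪greatCircle u e s, greatCircle u e t⟫ = Real.cos (s - t) := by
  have heu : ⟪e, u⟫ = 0 := by rw [real_inner_comm, hue]
  simp only [greatCircle, inner_add_left, inner_add_right, real_inner_smul_left,
    real_inner_smul_right, real_inner_self_eq_norm_sq, hu, he, hue, heu, Real.cos_sub]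
  ring

theorem norm_greatCircle (t : ℝ) : ‖greatCircle u e t‖ = 1 := by
  rw [norm_eq_sqrt_real_inner, inner_greatCircle hu he hue, sub_self, Real.cos_zero,
    Real.sqrt_one]

end greatCircle

theorem exists_norm_eq_one_inner_eq_zero (hdim : 2 ≤ Module.rank ℝ E) (u : E) :
    ∃ e : E, ‖e‖ = 1 ∧ ⟪u, e⟫ = 0 := by
  have hne : (ℝ ∙ u)ᗮ ≠ ⊥ := by
    rw [Ne, Submodule.orthogonal_eq_bot_iff]
    intro htop
    have : Module.rank ℝ (ℝ ∙ u) ≤ 1 := (rank_span_le _).trans_eq (Cardinal.mk_singleton u)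
    rw [htop, rank_top] at this
    exact absurd (hdim.trans this) (by norm_num)
  obtain ⟨w, hw, hw0⟩ := (Submodule.ne_bot_iff _).1 hne
  refine ⟨(‖w‖⁻¹ : ℝ) • w, norm_smul_inv_norm hw0, ?_⟩
  rw [real_inner_smul_right, Submodule.mem_orthogonal_singleton_iff_inner_right.1 hw, mul_zero]

theorem exists_eq_greatCircle (hdim : 2 ≤ Module.rank ℝ E) {u v : E} (hu : ‖u‖ = 1)
    (hv : ‖v‖ = 1) : ∃ e θ, ‖e‖ = 1 ∧ ⟪u, e⟫ = 0 ∧ greatCircle u e θ = v := by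
  set c := ⟪u, v⟫
  obtain ⟨hc₁, hc₂⟩ := abs_le.1 (by simpa [hu, hv] using abs_real_inner_le_norm u v : |c| ≤ 1)
  set w := v - c • u
  have huw : ⟪u, w⟫ = 0 := by
    simp [w, inner_sub_right, real_inner_smul_right, hu, c]
  have hw : ‖w‖ = √(1 - c ^ 2) := by
    rw [← Real.sqrt_sq (norm_nonneg w), ← real_inner_self_eq_norm_sq]
    congr 1
    simp only [w, inner_sub_left, inner_sub_right, real_inner_smul_left, real_inner_smul_right,
      real_inner_self_eq_norm_sq, norm_smul, Real.norm_eq_abs, mul_pow, sq_abs, hu, hv,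
      real_inner_comm u v, c]
    ring
  rcases eq_or_ne w 0 with hw0 | hw0
  · obtain ⟨e, he, hue⟩ := exists_norm_eq_one_inner_eq_zero hdim u
    refine ⟨e, Real.arccos c, he, hue, ?_⟩
    rw [greatCircle, Real.cos_arccos hc₁ hc₂, Real.sin_arccos, ← hw, hw0, norm_zero, zero_smul,
      add_zero]
    exact (sub_eq_zero.1 hw0).symm
  · refine ⟨(‖w‖⁻¹ : ℝ) • w, Real.arccos c, norm_smul_inv_norm hw0, ?_, ?_⟩
    · rw [real_inner_smul_right, huw, mul_zero]
    · rw [greatCircle, Real.cos_arccos hc₁ hc₂, Real.sin_arccos, ← hw,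
        smul_inv_smul₀ (norm_ne_zero_iff.2 hw0)]
      exact add_sub_cancel (c • u) v

end

theorem eventually_lt_cos_div_pow (θ : ℝ) {a : ℝ} (ha : a < 1) :
    ∀ᶠ n : ℕ in atTop, a < Real.cos (θ / n) ^ n := by
  have hlim : Tendsto (fun n : ℕ => 1 - θ ^ 2 / 2 / n) atTop (nhds 1) := by
    simpa using (tendsto_const_nhds (x := (1 : ℝ))).sub
      (tendsto_const_div_atTop_nhds_zero_nat (θ ^ 2 / 2))
  filter_upwards [hlim.eventually_const_lt ha, eventually_ge_atTop ⌈θ ^ 2⌉₊,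
    eventually_gt_atTop 0] with n hlt hθn hn
  have hn' : (1 : ℝ) ≤ n := Nat.one_le_cast.2 hn
  have hθ : (θ / n) ^ 2 ≤ 1 := by
    rw [div_pow, div_le_one (by positivity)]
    nlinarith [Nat.ceil_le.1 hθn]
  calc a < 1 - θ ^ 2 / 2 / n := hlt
    _ = 1 + n * -((θ / n) ^ 2 / 2) := by field_simp; ring
    _ ≤ (1 + -((θ / n) ^ 2 / 2)) ^ n := one_add_mul_le_pow (by linarith) n
    _ ≤ Real.cos (θ / n) ^ n :=
      pow_le_pow_left₀ (by linarith) (by linarith [Real.one_sub_sq_div_two_le_cos (x := θ / n)]) n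

namespace AttainsInfAtProjZero

variable {E : Type*} [NormedAddCommGroup E] [InnerProductSpace ℝ E]
  {φ : E → ℝ} (hφ : AttainsInfAtProjZero φ)
include hφ

theorem le_of_norm_sq_le_inner {x y : E} (h : ‖x‖ ^ 2 ≤ ⟪x, y⟫) : φ x ≤ φ y :=
  hφ _ ⟨x, (isProj_zero_halfSpace x).1⟩
    (isClosed_le continuous_const (continuous_const.inner continuous_id))
    (convex_halfSpace_ge (innerₛₗ ℝ x).isLinear _) x (isProj_zero_halfSpace x) y h

theorem le_smul_of_le {s t : ℝ} (hs : 0 ≤ s) (hst : s ≤ t) (v : E) : φ (s • v) ≤ φ (t • v) :=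
  hφ.le_of_norm_sq_le_inner <| by
    rw [real_inner_smul_left, real_inner_smul_right, real_inner_self_eq_norm_sq, norm_smul,
      mul_pow, Real.norm_eq_abs, sq_abs, ← mul_assoc, sq s]
    gcongr

theorem le_div_inner_smul {z w : E} (hz : ‖z‖ = 1) (hzw : ⟪z, w⟫ ≠ 0) (r : ℝ) :
    φ (r • z) ≤ φ ((r / ⟪z, w⟫) • w) :=
  hφ.le_of_norm_sq_le_inner <| le_of_eq <| by
    rw [real_inner_smul_left, real_inner_smul_right, norm_smul, hz, Real.norm_eq_abs, mul_one,
      sq_abs, div_mul_cancel₀ r hzw, sq]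

theorem le_smul_greatCircle {u e : E} (hu : ‖u‖ = 1) (he : ‖e‖ = 1) (hue : ⟪u, e⟫ = 0)
    {δ : ℝ} (hδ : Real.cos δ ≠ 0) (r : ℝ) (n : ℕ) :
    φ (r • u) ≤ φ ((r / Real.cos δ ^ n) • greatCircle u e (n * δ)) := by
  induction n with
  | zero => simp [greatCircle]
  | succ n ih =>
    have hinner : ⟪greatCircle u e (n * δ), greatCircle u e ((n + 1 : ℕ) * δ)⟫ = Real.cos δ := by
      rw [inner_greatCircle hu he hue, Nat.cast_succ, ← Real.cos_neg]
      ring_nf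
    refine ih.trans (le_of_le_of_eq
      (hφ.le_div_inner_smul (norm_greatCircle hu he hue _) (hinner ▸ hδ) _) ?_)
    rw [hinner, pow_succ, div_div]

theorem le_of_norm_lt (hdim : 2 ≤ Module.rank ℝ E) {x y : E} (hxy : ‖x‖ < ‖y‖) :
    φ x ≤ φ y := by
  rcases eq_or_ne x 0 with rfl | hx
  · exact hφ.le_of_norm_sq_le_inner (by simp)
  have hx' : 0 < ‖x‖ := norm_pos_iff.2 hx
  have hy' : 0 < ‖y‖ := hx'.trans hxy
  have hu : ‖‖x‖⁻¹ • x‖ = 1 := norm_smul_inv_norm hx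
  have hv : ‖‖y‖⁻¹ • y‖ = 1 := norm_smul_inv_norm (norm_pos_iff.1 hy')
  obtain ⟨e, θ, he, hue, hθ⟩ := exists_eq_greatCircle hdim hu hv
  obtain ⟨n, hcos, hn⟩ :=
    ((eventually_lt_cos_div_pow θ ((div_lt_one hy').2 hxy)).and (eventually_ne_atTop 0)).exists
  have hc : 0 < Real.cos (θ / n) ^ n := (div_pos hx' hy').trans hcos
  calc φ x = φ (‖x‖ • (‖x‖⁻¹ • x)) := by rw [smul_inv_smul₀ hx'.ne']
    _ ≤ φ ((‖x‖ / Real.cos (θ / n) ^ n) • greatCircle _ e (n * (θ / n))) :=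
      hφ.le_smul_greatCircle hu he hue (pow_ne_zero_iff hn |>.1 hc.ne') _ n
    _ = φ ((‖x‖ / Real.cos (θ / n) ^ n) • (‖y‖⁻¹ • y)) := by
      rw [mul_div_cancel₀ _ (Nat.cast_ne_zero.2 hn), hθ]
    _ ≤ φ (‖y‖ • (‖y‖⁻¹ • y)) := by
      refine hφ.le_smul_of_le (by positivity) ?_ _
      rw [div_le_iff₀ hc, mul_comm, ← div_le_iff₀ hy']
      exact hcos.le
    _ = φ y := by rw [smul_inv_smul₀ hy'.ne']

end AttainsInfAtProjZero

theorem countable_setOf_fiber_nonconstant {α : Type*} (f φ : α → ℝ)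
    (hmono : ∀ x y, f x < f y → φ x ≤ φ y) :
    {ρ | ∃ x y, f x = ρ ∧ f y = ρ ∧ φ x ≠ φ y}.Countable := by
  set S := {ρ | ∃ x y, f x = ρ ∧ f y = ρ ∧ φ x ≠ φ y}
  have hS : ∀ ρ : S, ∃ x y, f x = ρ ∧ f y = ρ ∧ φ x < φ y := by
    rintro ⟨ρ, x, y, hx, hy, hne⟩
    rcases hne.lt_or_gt with h | h
    exacts [⟨x, y, hx, hy, h⟩, ⟨y, x, hy, hx, h⟩]
  choose x y hx hy hlt using hS
  have hdisj : ∀ ρ ρ' : S, (ρ : ℝ) < ρ' →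
      Disjoint (Ioo (φ (x ρ)) (φ (y ρ))) (Ioo (φ (x ρ')) (φ (y ρ'))) := fun ρ ρ' h =>
    (Iic_disjoint_Ioi (hmono _ _ (by rwa [hy, hx]))).mono
      (Ioo_subset_Iio_self.trans Iio_subset_Iic_self) Ioo_subset_Ioi_self
  refine countable_coe_iff.1 (Pairwise.countable_of_isOpen_disjoint (fun ρ ρ' hne => ?_)
    (fun _ => isOpen_Ioo) (fun ρ => nonempty_Ioo.2 (hlt ρ)))
  rcases (Subtype.coe_ne_coe.2 hne).lt_or_gt with h | h
  exacts [hdisj ρ ρ' h, (hdisj ρ' ρ h).symm]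

theorem constant_on_spheres_off_countable_general
    {H : Type*} [NormedAddCommGroup H] [InnerProductSpace ℝ H]
    (hdim : 2 ≤ Module.rank ℝ H) (φ : H → ℝ)
    (hφ : ∀ C : Set H, C.Nonempty → IsClosed C → Convex ℝ C →
      ∀ p, IsProj C 0 p → ∀ y ∈ C, φ p ≤ φ y) :
    Set.Countable {ρ : ℝ | 0 ≤ ρ ∧ ∃ x y : H, ‖x‖ = ρ ∧ ‖y‖ = ρ ∧ φ x ≠ φ y} :=
  (countable_setOf_fiber_nonconstant _ φ fun _ _ =>
    AttainsInfAtProjZero.le_of_norm_lt hφ hdim).mono fun _ hρ => hρ.2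

theorem constant_on_spheres_off_countable
    {H : Type*} [NormedAddCommGroup H] [InnerProductSpace ℝ H] [CompleteSpace H]
    (hdim : 2 ≤ Module.rank ℝ H) (φ : H → ℝ)
    (hφ : ∀ C : Set H, C.Nonempty → IsClosed C → Convex ℝ C →
      ∀ p, IsProj C 0 p → ∀ y ∈ C, φ p ≤ φ y) :
    Set.Countable {ρ : ℝ | 0 ≤ ρ ∧ ∃ x y : H, ‖x‖ = ρ ∧ ‖y‖ = ρ ∧ φ x ≠ φ y} :=
  constant_on_spheres_off_countable_general hdim φ hφ
end

section
/- Let H be a real Hilbert space, m ≥ 2, C_1,…,C_m nonempty closed convex subsets of H, C = C_1 × ⋯ × C_m ⊆ H^m, D the diagonal of H^m, and suppose y ∈ H minimizes φ(y) = ∑ dist(y, C_i)². Then x = P_C(y,…,y) is a fixed point of P_C ∘ P_D, and consequently x minimizes Φ(y_1,…,y_m) = ∑_{i<j} ‖y_i - y_j‖² over C. -/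
open Finset

section Mean

variable {ι E : Type*} [Fintype ι]

noncomputable def mean [AddCommGroup E] [Module ℝ E] (x : ι → E) : E :=
  (Fintype.card ι : ℝ)⁻¹ • ∑ i, x i

theorem sum_mean_sub_eq_zero [AddCommGroup E] [Module ℝ E] (x : ι → E) :
    ∑ i, (mean x - x i) = 0 := by
  cases isEmpty_or_nonempty ι
  · simp
  · have hcard : (Fintype.card ι : ℝ) ≠ 0 := Nat.cast_ne_zero.mpr Fintype.card_ne_zero
    rw [sum_sub_distrib, sum_const, card_univ, ← Nat.cast_smul_eq_nsmul ℝ, mean,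
      smul_inv_smul₀ hcard, sub_self]

variable [NormedAddCommGroup E] [InnerProductSpace ℝ E]

theorem sum_norm_add_sq_of_sum_eq_zero (c : E) {b : ι → E} (hb : ∑ i, b i = 0) :
    ∑ i, ‖c + b i‖ ^ 2 = Fintype.card ι * ‖c‖ ^ 2 + ∑ i, ‖b i‖ ^ 2 := by
  simp only [norm_add_sq_real, sum_add_distrib, ← mul_sum, ← inner_sum, hb, inner_zero_right,
    mul_zero, add_zero, sum_const, card_univ, nsmul_eq_mul]

theorem sum_norm_sub_sq_eq (x : ι → E) (w : E) :
    ∑ i, ‖w - x i‖ ^ 2 = Fintype.card ι * ‖w - mean x‖ ^ 2 + ∑ i, ‖mean x - x i‖ ^ 2 := by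
  simpa only [sub_add_sub_cancel] using
    sum_norm_add_sq_of_sum_eq_zero (w - mean x) (sum_mean_sub_eq_zero x)

theorem sum_norm_mean_sub_sq_le (x : ι → E) (w : E) :
    ∑ i, ‖mean x - x i‖ ^ 2 ≤ ∑ i, ‖w - x i‖ ^ 2 := by
  rw [sum_norm_sub_sq_eq x w]
  exact le_add_of_nonneg_left (by positivity)

theorem eq_mean_of_sum_norm_sub_sq_le [Nonempty ι] {x : ι → E} {w : E}
    (h : ∑ i, ‖w - x i‖ ^ 2 ≤ ∑ i, ‖mean x - x i‖ ^ 2) : w = mean x := by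
  rw [sum_norm_sub_sq_eq x w, add_le_iff_nonpos_left] at h
  have hcard : (0 : ℝ) < Fintype.card ι := Nat.cast_pos.mpr Fintype.card_pos
  have hsq : ‖w - mean x‖ ^ 2 = 0 :=
    le_antisymm (nonpos_of_mul_nonpos_right h hcard) (by positivity)
  simpa [sub_eq_zero] using hsq

end Mean

section Pairwise

variable {ι E : Type*} [Fintype ι] [NormedAddCommGroup E]

def sumPairwiseDistSq [LinearOrder ι] (x : ι → E) : ℝ :=
  ∑ i, ∑ j, if i < j then ‖x i - x j‖ ^ 2 else 0

theorem two_mul_sumPairwiseDistSq [LinearOrder ι] (x : ι → E) :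
    2 * sumPairwiseDistSq x = ∑ i, ∑ j, ‖x i - x j‖ ^ 2 := by
  have hsplit : ∀ i j, ‖x i - x j‖ ^ 2 =
      (if i < j then ‖x i - x j‖ ^ 2 else 0) + (if j < i then ‖x j - x i‖ ^ 2 else 0) := by
    intro i j
    rcases lt_trichotomy i j with h | rfl | h
    · simp [h, h.not_gt]
    · simp
    · simp [h, h.not_gt, norm_sub_rev]
  rw [Fintype.sum_congr _ _ fun i => Fintype.sum_congr _ _ (hsplit i)]
  simp only [sum_add_distrib]
  rw [sum_comm (f := fun i j => if j < i then ‖x j - x i‖ ^ 2 else 0), sumPairwiseDistSq]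
  ring

variable [InnerProductSpace ℝ E]

theorem sum_sum_norm_sub_sq_of_sum_eq_zero {a : ι → E} (ha : ∑ i, a i = 0) :
    ∑ i, ∑ j, ‖a i - a j‖ ^ 2 = 2 * (Fintype.card ι * ∑ i, ‖a i‖ ^ 2) := by
  simp only [norm_sub_sq_real, sum_add_distrib, sum_sub_distrib, ← mul_sum, ← inner_sum, ha,
    inner_zero_right, mul_zero, sub_zero, sum_const, card_univ, nsmul_eq_mul]
  ring

theorem sumPairwiseDistSq_eq [LinearOrder ι] (x : ι → E) :
    sumPairwiseDistSq x = Fintype.card ι * ∑ i, ‖mean x - x i‖ ^ 2 := by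
  have h := sum_sum_norm_sub_sq_of_sum_eq_zero (sum_mean_sub_eq_zero x)
  simp only [sub_sub_sub_cancel_left] at h
  rw [sum_comm, ← two_mul_sumPairwiseDistSq] at h
  linarith

end Pairwise

theorem IsProj.infDist_eq {E : Type*} [NormedAddCommGroup E] {C : Set E} {x p : E}
    (h : IsProj C x p) : Metric.infDist x C = ‖x - p‖ := by
  refine le_antisymm ?_ ((Metric.le_infDist ⟨p, h.1⟩).mpr fun q hq => ?_)
  · simpa only [dist_eq_norm] using Metric.infDist_le_dist_of_mem h.1
  · simpa only [dist_eq_norm] using h.2 q hq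

theorem sum_norm_sub_sq_le_of_isProj_of_minimizer {ι E : Type*} [Fintype ι]
    [NormedAddCommGroup E] {C : ι → Set E} {y : E} {x : ι → E}
    (hx : ∀ i, IsProj (C i) y (x i))
    (hy : ∀ w, ∑ i, Metric.infDist y (C i) ^ 2 ≤ ∑ i, Metric.infDist w (C i) ^ 2)
    {w : E} {p : ι → E} (hp : ∀ i, p i ∈ C i) :
    ∑ i, ‖y - x i‖ ^ 2 ≤ ∑ i, ‖w - p i‖ ^ 2 :=
  calc ∑ i, ‖y - x i‖ ^ 2 = ∑ i, Metric.infDist y (C i) ^ 2 := by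
        simp only [(hx _).infDist_eq]
    _ ≤ ∑ i, Metric.infDist w (C i) ^ 2 := hy w
    _ ≤ ∑ i, ‖w - p i‖ ^ 2 := by
        gcongr with i
        · exact Metric.infDist_nonneg
        · simpa only [dist_eq_norm] using Metric.infDist_le_dist_of_mem (hp i)

theorem minimizer_gives_fixed_point_and_Phi_minimum_general
    {H : Type*} [NormedAddCommGroup H] [InnerProductSpace ℝ H]
    (m : ℕ) (C : Fin m → Set H)
    (y : H)
    (hy : ∀ w : H, ∑ i : Fin m, (Metric.infDist y (C i)) ^ 2 ≤
      ∑ i : Fin m, (Metric.infDist w (C i)) ^ 2)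
    (x : Fin m → H) (hx : ∀ i, IsProj (C i) y (x i)) :
    (∀ i, IsProj (C i) ((m : ℝ)⁻¹ • ∑ j : Fin m, x j) (x i)) ∧
    (∀ i, x i ∈ C i) ∧
    ∀ z : Fin m → H, (∀ i, z i ∈ C i) →
      (∑ i : Fin m, ∑ j : Fin m, if i < j then ‖x i - x j‖ ^ 2 else 0) ≤
        ∑ i : Fin m, ∑ j : Fin m, if i < j then ‖z i - z j‖ ^ 2 else 0 := by
  have hmem : ∀ i, x i ∈ C i := fun i => (hx i).1
  have hmean : mean x = (m : ℝ)⁻¹ • ∑ j, x j := by simp only [mean, Fintype.card_fin]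
  refine ⟨fun i => ?_, hmem, fun z hz => ?_⟩
  · have : Nonempty (Fin m) := ⟨i⟩
    rw [← hmean, ← eq_mean_of_sum_norm_sub_sq_le
      (sum_norm_sub_sq_le_of_isProj_of_minimizer hx hy hmem)]
    exact hx i
  · change sumPairwiseDistSq x ≤ sumPairwiseDistSq z
    rw [sumPairwiseDistSq_eq, sumPairwiseDistSq_eq]
    refine mul_le_mul_of_nonneg_left ?_ (Nat.cast_nonneg _)
    calc ∑ i, ‖mean x - x i‖ ^ 2 ≤ ∑ i, ‖y - x i‖ ^ 2 := sum_norm_mean_sub_sq_le x y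
      _ ≤ ∑ i, ‖mean z - z i‖ ^ 2 := sum_norm_sub_sq_le_of_isProj_of_minimizer hx hy hz

theorem minimizer_gives_fixed_point_and_Phi_minimum
    {H : Type*} [NormedAddCommGroup H] [InnerProductSpace ℝ H] [CompleteSpace H]
    (m : ℕ) (hm : 2 ≤ m) (C : Fin m → Set H)
    (hne : ∀ i, (C i).Nonempty) (hcl : ∀ i, IsClosed (C i)) (hconv : ∀ i, Convex ℝ (C i))
    (y : H)
    (hy : ∀ w : H, ∑ i : Fin m, (Metric.infDist y (C i)) ^ 2 ≤
      ∑ i : Fin m, (Metric.infDist w (C i)) ^ 2)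
    (x : Fin m → H) (hx : ∀ i, IsProj (C i) y (x i)) :
    (∀ i, IsProj (C i) ((m : ℝ)⁻¹ • ∑ j : Fin m, x j) (x i)) ∧
    (∀ i, x i ∈ C i) ∧
    ∀ z : Fin m → H, (∀ i, z i ∈ C i) →
      (∑ i : Fin m, ∑ j : Fin m, if i < j then ‖x i - x j‖ ^ 2 else 0) ≤
        ∑ i : Fin m, ∑ j : Fin m, if i < j then ‖z i - z j‖ ^ 2 else 0 :=
  minimizer_gives_fixed_point_and_Phi_minimum_general m C y hy x hx
end
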